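/- arXiv:1604.02311 — 2 statements merged into one kernel-verified Lean document; each statement's English description precedes it below -/
import Mathlib

section
/- Let T be a Y(2|1) T-family in A, let ℓ ≥ 1, and let v, u₁, …, u_ℓ ∈ ℂ be such that the list (v, u₁, …, u_ℓ) is admissible. Then T₂₃(v)·𝕋₁₃(ū) = (−1)^ℓ f(ū,v)·𝕋₁₃(ū)·T₂₃(v) + Σ_{k=1}^{ℓ} g(uₖ,v)·g(uₖ,ūₖ)·T₁₃(v)·𝕋₁₃(ūₖ)·T₂₃(uₖ), where ūₖ denotes ū with uₖ removed, f(ū,v) = ∏ⱼ f(uⱼ,v) and g(uₖ,ūₖ) = ∏_{j≠k} g(uₖ,uⱼ). -/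
open scoped BigOperators
open MulOpposite

noncomputable section

namespace Bethe

variable {A : Type*} [Ring A] [Algebra ℂ A]

/-- `g(u,v) = c/(u-v)` -/
def gg (c u v : ℂ) : ℂ := c / (u - v)

/-- `f(u,v) = (u-v+c)/(u-v)` -/
def ff (c u v : ℂ) : ℂ := (u - v + c) / (u - v)

/-- `h(u,v) = (u-v+c)/c` -/
def hh (c u v : ℂ) : ℂ := (u - v + c) / c

/-- A list of parameters is admissible if its entries are pairwise distinct and
`x - y + c ≠ 0` for any two distinct entries `x`, `y`. -/
def Admissible (c : ℂ) (l : List ℂ) : Prop :=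
  l.Pairwise fun x y => x ≠ y ∧ x - y + c ≠ 0 ∧ y - x + c ≠ 0

/-- `∏_{x ∈ xs} ∏_{y ∈ ys} f(x,y)` -/
def prodFF (c : ℂ) (xs ys : List ℂ) : ℂ :=
  (xs.map fun x => (ys.map fun y => ff c x y).prod).prod

/-- `∏_{x ∈ xs} ∏_{y ∈ ys} g(x,y)` -/
def prodGG (c : ℂ) (xs ys : List ℂ) : ℂ :=
  (xs.map fun x => (ys.map fun y => gg c x y).prod).prod

/-- `∏_{x ∈ xs} ∏_{y ∈ ys} h(x,y)` -/
def prodHH (c : ℂ) (xs ys : List ℂ) : ℂ :=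
  (xs.map fun x => (ys.map fun y => hh c x y).prod).prod

/-- `H(w̄) = ∏_{j>k} h(wⱼ,wₖ)` -/
def Hnorm (c : ℂ) : List ℂ → ℂ
  | [] => 1
  | x :: xs => ((xs.map fun y => hh c y x).prod) * Hnorm c xs

/-- `H(w̄*) = ∏_{j<k} h(wⱼ,wₖ)` -/
def HnormRev (c : ℂ) : List ℂ → ℂ
  | [] => 1
  | x :: xs => ((xs.map fun y => hh c x y).prod) * HnormRev c xs

/-- product of `h` over ordered pairs of distinct positions of a list -/
def prodHHne (c : ℂ) (xs : List ℂ) : ℂ :=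
  ∏ j : Fin xs.length, ∏ k : Fin xs.length,
    if j ≠ k then hh c (xs.get j) (xs.get k) else 1

/-- ordered product `T(w₁)⋯T(wₙ)` -/
def Tprod (Tij : ℂ → A) (l : List ℂ) : A := (l.map Tij).prod

/-- normalized ordered product `H(w̄)⁻¹ T(w₁)⋯T(wₙ)` -/
def TT (c : ℂ) (Tij : ℂ → A) (l : List ℂ) : A := (Hnorm c l)⁻¹ • Tprod Tij l

/-- normalized ordered product `H(w̄*)⁻¹ T(w₁)⋯T(wₙ)` -/
def TTrev (c : ℂ) (Tij : ℂ → A) (l : List ℂ) : A := (HnormRev c l)⁻¹ • Tprod Tij l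

/-- The defining (RTT) commutation relations of a super-Yangian `T`-family with
`ℤ₂`-grading `p`. -/
def IsTFam (c : ℂ) {N : ℕ} (p : Fin N → ℕ) (T : Fin N → Fin N → ℂ → A) : Prop :=
  ∀ i j k l : Fin N, ∀ z w : ℂ, z ≠ w →
    T i j z * T k l w - ((-1 : ℂ) ^ ((p i + p j) * (p k + p l))) • (T k l w * T i j z)
      = ((-1 : ℂ) ^ (p l * (p i + p j) + p i * p j) * gg c z w) •
          (T i l z * T k j w - T i l w * T k j z)

/-- the distinguished grading of `gl(2|1)`: `[1]=[2]=0`, `[3]=1` -/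
def p21 : Fin 3 → ℕ := ![0, 0, 1]

/-- the distinguished grading of `gl(1|2)`: `[1]=0`, `[2]=[3]=1` -/
def p12 : Fin 3 → ℕ := ![0, 1, 1]

/-- the sublist of `l` given by the positions in `S`, in the inherited order -/
def sel (l : List ℂ) (S : Finset (Fin l.length)) : List ℂ :=
  (S.sort (· ≤ ·)).map l.get

/-- `λ(w̄) = ∏ⱼ λ(wⱼ)` -/
def lamP (lam2 : ℂ → ℂ) (l : List ℂ) : ℂ := (l.map lam2).prod

/-- The Izergin kernel `K_ℓ(v̄|ū)`. -/
def Kiz (c : ℂ) {ℓ : ℕ} (vs us : Fin ℓ → ℂ) : ℂ :=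
  (∏ j : Fin ℓ, ∏ k : Fin ℓ, if (k : ℕ) < (j : ℕ) then gg c (vs j) (vs k) else 1) *
    (∏ j : Fin ℓ, ∏ k : Fin ℓ, if (k : ℕ) < (j : ℕ) then gg c (us k) (us j) else 1) *
    (∏ j : Fin ℓ, ∏ k : Fin ℓ, hh c (vs j) (us k)) *
    Matrix.det (Matrix.of fun j k => gg c (vs j) (us k) / hh c (vs j) (us k))

/-- The Izergin kernel for lists of equal length (and junk value `0` otherwise). -/
def KizL (c : ℂ) (vs us : List ℂ) : ℂ :=
  if h : vs.length = us.length then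
    Kiz c vs.get fun j => us.get (Fin.cast h j)
  else 0

/-- The operator `X_{a,b}(ū,v̄)` of the paper (`Y(2|1)` case). -/
def X (c : ℂ) (T : Fin 3 → Fin 3 → ℂ → A) (u v : List ℂ) : A :=
  ∑ S : Finset (Fin u.length), ∑ Q : Finset (Fin v.length),
    if S.card = Q.card then
      (prodGG c (sel v Q) (sel u S) * prodFF c (sel u S) (sel u Sᶜ) *
          prodGG c (sel v Qᶜ) (sel v Q) * prodHHne c (sel u S)) •
        (TT c (T 0 2) (sel u S) * Tprod (T 0 1) (sel u Sᶜ) *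
          TT c (T 1 2) (sel v Qᶜ) * Tprod (T 1 1) (sel v Q))
    else 0

/-- The operator `Y_{a,b}(ū,v̄)` of the paper (`Y(2|1)` case). -/
def Y (c : ℂ) (T : Fin 3 → Fin 3 → ℂ → A) (u v : List ℂ) : A :=
  ∑ S : Finset (Fin u.length), ∑ Q : Finset (Fin v.length),
    if S.card = Q.card then
      (KizL c (sel v Q) (sel u S) * prodFF c (sel u S) (sel u Sᶜ) *
          prodGG c (sel v Qᶜ) (sel v Q)) •
        (TT c (T 0 2) (sel v Q) * TT c (T 1 2) (sel v Qᶜ) *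
          Tprod (T 0 1) (sel u Sᶜ) * Tprod (T 1 1) (sel u S))
    else 0

/-- First explicit expression for the `Y(2|1)` Bethe vector (operator part,
the weights `λ₂` included as scalars). -/
def PhiA (c : ℂ) (T : Fin 3 → Fin 3 → ℂ → A) (lam2 : ℂ → ℂ) (u v : List ℂ) : A :=
  ∑ S : Finset (Fin u.length), ∑ Q : Finset (Fin v.length),
    if S.card = Q.card then
      (prodGG c (sel v Q) (sel u S) * prodFF c (sel u S) (sel u Sᶜ) *
          prodGG c (sel v Qᶜ) (sel v Q) * prodHHne c (sel u S) * lamP lam2 (sel v Q)) •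
        (TT c (T 0 2) (sel u S) * Tprod (T 0 1) (sel u Sᶜ) * TT c (T 1 2) (sel v Qᶜ))
    else 0

/-- Second explicit expression for the `Y(2|1)` Bethe vector (operator part). -/
def PhiB (c : ℂ) (T : Fin 3 → Fin 3 → ℂ → A) (lam2 : ℂ → ℂ) (u v : List ℂ) : A :=
  ∑ S : Finset (Fin u.length), ∑ Q : Finset (Fin v.length),
    if S.card = Q.card then
      (KizL c (sel v Q) (sel u S) * prodFF c (sel u S) (sel u Sᶜ) *
          prodGG c (sel v Qᶜ) (sel v Q) * lamP lam2 (sel u S)) •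
        (TT c (T 0 2) (sel v Q) * TT c (T 1 2) (sel v Qᶜ) * Tprod (T 0 1) (sel u Sᶜ))
    else 0

/-- First explicit expression for the `Y(1|2)` Bethe vector, without the overall
sign `(-1)^b` (operator part). -/
def PhiTA (c : ℂ) (T : Fin 3 → Fin 3 → ℂ → A) (lam2 : ℂ → ℂ) (u v : List ℂ) : A :=
  ∑ S : Finset (Fin u.length), ∑ Q : Finset (Fin v.length),
    if S.card = Q.card then
      (prodGG c (sel u S) (sel v Q) * prodFF c (sel v Q) (sel v Qᶜ) *
          prodGG c (sel u Sᶜ) (sel u S) * prodHHne c (sel v Q) * lamP lam2 (sel u S)) •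
        (TT c (T 0 2) (sel v Q) * Tprod (T 1 2) (sel v Qᶜ) * TT c (T 0 1) (sel u Sᶜ))
    else 0

/-- Second explicit expression for the `Y(1|2)` Bethe vector, without the overall
sign `(-1)^b` (operator part). -/
def PhiTB (c : ℂ) (T : Fin 3 → Fin 3 → ℂ → A) (lam2 : ℂ → ℂ) (u v : List ℂ) : A :=
  ∑ S : Finset (Fin u.length), ∑ Q : Finset (Fin v.length),
    if S.card = Q.card then
      (KizL c (sel u S) (sel v Q) * prodFF c (sel v Q) (sel v Qᶜ) *
          prodGG c (sel u Sᶜ) (sel u S) * lamP lam2 (sel v Q)) •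
        (TT c (T 0 2) (sel u S) * TT c (T 0 1) (sel u Sᶜ) * Tprod (T 1 2) (sel v Qᶜ))
    else 0

/-- First explicit expression for the dual `Y(2|1)` Bethe vector, without the
overall sign `(-1)^{b(b-1)/2}`.  `E` is a right `A`-module, i.e. a left
`Aᵐᵒᵖ`-module; `op X • Ωd` is `Ωd · X`. -/
def PsiA {E : Type*} [AddCommGroup E] [Module ℂ E] [Module Aᵐᵒᵖ E]
    (c : ℂ) (T : Fin 3 → Fin 3 → ℂ → A) (lam2 : ℂ → ℂ) (u v : List ℂ) (Ωd : E) : E :=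
  ∑ S : Finset (Fin u.length), ∑ Q : Finset (Fin v.length),
    if S.card = Q.card then
      (prodGG c (sel v Q) (sel u S) * prodFF c (sel u S) (sel u Sᶜ) *
          prodGG c (sel v Qᶜ) (sel v Q) * prodHHne c (sel u S) * lamP lam2 (sel v Q)) •
        (op (TTrev c (T 2 1) (sel v Qᶜ) * Tprod (T 1 0) (sel u Sᶜ) *
              TTrev c (T 2 0) (sel u S)) • Ωd)
    else 0

/-- The dual `Y(2|1)` Bethe vector `Ψ_{a,b}(ū,v̄)`. -/
def Psi {E : Type*} [AddCommGroup E] [Module ℂ E] [Module Aᵐᵒᵖ E]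
    (c : ℂ) (T : Fin 3 → Fin 3 → ℂ → A) (lam2 : ℂ → ℂ) (u v : List ℂ) (Ωd : E) : E :=
  ((-1 : ℂ) ^ (v.length * (v.length - 1) / 2)) • PsiA c T lam2 u v Ωd

/-- Second explicit expression for the dual `Y(2|1)` Bethe vector, without the
overall sign `(-1)^{b(b-1)/2}`. -/
def PsiB {E : Type*} [AddCommGroup E] [Module ℂ E] [Module Aᵐᵒᵖ E]
    (c : ℂ) (T : Fin 3 → Fin 3 → ℂ → A) (lam2 : ℂ → ℂ) (u v : List ℂ) (Ωd : E) : E :=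
  ∑ S : Finset (Fin u.length), ∑ Q : Finset (Fin v.length),
    if S.card = Q.card then
      (KizL c (sel v Q) (sel u S) * prodFF c (sel u S) (sel u Sᶜ) *
          prodGG c (sel v Qᶜ) (sel v Q) * lamP lam2 (sel u S)) •
        (op (Tprod (T 1 0) (sel u Sᶜ) * TTrev c (T 2 1) (sel v Qᶜ) *
              TTrev c (T 2 0) (sel v Q)) • Ωd)
    else 0

/-!
Induction on `ℓ`, peeling off the first parameter: `𝕋₁₃(x, w̄) = h(w̄,x)⁻¹ T₁₃(x) 𝕋₁₃(w̄)`.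
Moving `T₂₃(v)` past `T₁₃(x)` by
`T₂₃(v) T₁₃(x) = -f(x,v) T₁₃(x) T₂₃(v) + g(x,v) T₁₃(v) T₂₃(x)`
and applying the induction hypothesis to `(v, w̄)` and to `(x, w̄)` produces every term.
The direct term is immediate; the exchange term of `x` comes from
`(-1)^{#w̄} f(w̄,x) = h(w̄,x) g(x,w̄)`; for each `wₖ` the two contributions merge after the
exchange relation `-f(x,v) T₁₃(x) T₁₃(v) = f(v,x) T₁₃(v) T₁₃(x)`, by the scalar identity
`f(v,x) g(a,v) + g(x,v) g(a,x) = h(a,x) g(a,x) g(a,v)`.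
-/

lemma TT_cons (c : ℂ) (Tij : ℂ → A) (x : ℂ) (l : List ℂ) :
    TT c Tij (x :: l) = ((l.map fun y => hh c y x).prod)⁻¹ • (Tij x * TT c Tij l) := by
  simp only [TT, Hnorm, Tprod, List.map_cons, List.prod_cons, mul_inv, mul_smul, mul_smul_comm]

lemma prod_map_eq_mul_prod_map_eraseIdx {α M : Type*} [CommMonoid M] (φ : α → M) (l : List α)
    (k : Fin l.length) :
    (l.map φ).prod = φ (l.get k) * ((l.eraseIdx k).map φ).prod := by
  rw [← List.eraseIdx_map, ← List.CommMonoid.mul_prod_eraseIdx (i := k) (by simp)]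
  simp

lemma one_add_gg {c z v : ℂ} (h : z ≠ v) : 1 + gg c z v = ff c z v := by
  have : z - v ≠ 0 := sub_ne_zero.mpr h
  simp only [gg, ff]
  field_simp

lemma one_sub_gg {c z v : ℂ} (h : z ≠ v) : 1 - gg c z v = ff c v z := by
  have : z - v ≠ 0 := sub_ne_zero.mpr h
  have : v - z ≠ 0 := sub_ne_zero.mpr h.symm
  simp only [gg, ff]
  field_simp
  ring

lemma neg_ff_eq_hh_mul_gg {c a x : ℂ} (hc : c ≠ 0) (h : a ≠ x) :
    -ff c a x = hh c a x * gg c x a := by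
  have : a - x ≠ 0 := sub_ne_zero.mpr h
  have : x - a ≠ 0 := sub_ne_zero.mpr h.symm
  simp only [ff, hh, gg]
  field_simp
  ring

lemma neg_one_pow_mul_prod_ff {c : ℂ} (hc : c ≠ 0) (x : ℂ) (l : List ℂ) (h : ∀ y ∈ l, y ≠ x) :
    (-1 : ℂ) ^ l.length * (l.map fun y => ff c y x).prod
      = (l.map fun y => hh c y x).prod * (l.map fun y => gg c x y).prod := by
  induction l with
  | nil => simp
  | cons a l ih =>
    simp only [List.map_cons, List.prod_cons, List.length_cons, pow_succ]
    rw [mul_mul_mul_comm (hh c a x), ← ih fun y hy => h y (List.mem_cons_of_mem a hy),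
      ← neg_ff_eq_hh_mul_gg hc (h a List.mem_cons_self)]
    ring

lemma ff_mul_gg_add_gg_mul_gg {c a v x : ℂ} (hc : c ≠ 0) (hav : a ≠ v) (hax : a ≠ x) (hvx : v ≠ x) :
    ff c v x * gg c a v + gg c x v * gg c a x = hh c a x * gg c a x * gg c a v := by
  have : a - v ≠ 0 := sub_ne_zero.mpr hav
  have : a - x ≠ 0 := sub_ne_zero.mpr hax
  have : v - x ≠ 0 := sub_ne_zero.mpr hvx
  have : x - v ≠ 0 := sub_ne_zero.mpr hvx.symm
  simp only [ff, hh, gg]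
  field_simp
  ring

namespace IsTFam

variable {c : ℂ} {T : Fin 3 → Fin 3 → ℂ → A}

lemma T23_mul_T13 (hT : IsTFam c p21 T) {z v : ℂ} (h : z ≠ v) :
    T 1 2 v * T 0 2 z = -ff c z v • (T 0 2 z * T 1 2 v) + gg c z v • (T 0 2 v * T 1 2 z) := by
  have h0 := hT 0 2 1 2 z v h
  simp only [show p21 0 = 0 from rfl, show p21 1 = 0 from rfl, show p21 2 = 1 from rfl] at h0
  norm_num at h0
  rw [← one_add_gg h]
  linear_combination (norm := module) h0

lemma T13_mul_T13 (hT : IsTFam c p21 T) {x v : ℂ} (h : x ≠ v) :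
    -ff c x v • (T 0 2 x * T 0 2 v) = ff c v x • (T 0 2 v * T 0 2 x) := by
  have h0 := hT 0 2 0 2 x v h
  simp only [show p21 0 = 0 from rfl, show p21 2 = 1 from rfl] at h0
  norm_num at h0
  rw [← one_add_gg h, ← one_sub_gg h]
  linear_combination (norm := module) -h0

end IsTFam

def directTerm (c : ℂ) (T : Fin 3 → Fin 3 → ℂ → A) (v : ℂ) (u : List ℂ) : A :=
  ((-1 : ℂ) ^ u.length * (u.map fun x => ff c x v).prod) • (TT c (T 0 2) u * T 1 2 v)

def exchangeTerm (c : ℂ) (T : Fin 3 → Fin 3 → ℂ → A) (v : ℂ) (u : List ℂ)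
    (k : Fin u.length) : A :=
  (gg c (u.get k) v * ((u.eraseIdx k).map fun x => gg c (u.get k) x).prod) •
    (T 0 2 v * TT c (T 0 2) (u.eraseIdx k) * T 1 2 (u.get k))

section CommutationTerms

variable {c : ℂ} {T : Fin 3 → Fin 3 → ℂ → A} {v x : ℂ} {w : List ℂ}

lemma directTerm_cons :
    directTerm c T v (x :: w)
      = (((w.map fun y => hh c y x).prod)⁻¹ * -ff c x v) • (T 0 2 x * directTerm c T v w) := by
  simp only [directTerm, TT_cons, List.length_cons, List.map_cons, List.prod_cons,
    mul_smul_comm, smul_mul_assoc, smul_smul, mul_assoc]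
  match_scalars
  ring

lemma exchangeTerm_cons_zero (hc : c ≠ 0) (hx : ∀ y ∈ w, y ≠ x)
    (hH : (w.map fun y => hh c y x).prod ≠ 0) :
    exchangeTerm c T v (x :: w) 0
      = (((w.map fun y => hh c y x).prod)⁻¹ * gg c x v) • (T 0 2 v * directTerm c T x w) := by
  simp only [exchangeTerm, directTerm, mul_smul_comm, smul_smul, mul_assoc]
  rw [neg_one_pow_mul_prod_ff hc x w hx]
  congr 1
  field_simp
  simp

lemma exchangeTerm_cons_succ (hc : c ≠ 0) (hT : IsTFam c p21 T) (hxv : x ≠ v)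
    (k : Fin w.length) (hax : w.get k ≠ x) (hav : w.get k ≠ v) (haxc : w.get k - x + c ≠ 0) :
    exchangeTerm c T v (x :: w) k.succ
      = (((w.map fun y => hh c y x).prod)⁻¹ * -ff c x v) • (T 0 2 x * exchangeTerm c T v w k)
        + (((w.map fun y => hh c y x).prod)⁻¹ * gg c x v) •
          (T 0 2 v * exchangeTerm c T x w k) := by
  set a := w.get k
  set R := TT c (T 0 2) (w.eraseIdx k) * T 1 2 a
  set G := ((w.eraseIdx k).map fun y => gg c a y).prod
  have hswap := congrArg (· * R) (hT.T13_mul_T13 hxv)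
  simp only [smul_mul_assoc, mul_assoc] at hswap
  have hhax : hh c a x ≠ 0 := div_ne_zero haxc hc
  rw [prod_map_eq_mul_prod_map_eraseIdx (fun y => hh c y x) w k]
  symm
  calc _ = ((hh c a x * ((w.eraseIdx k).map fun y => hh c y x).prod)⁻¹ * G *
          (ff c v x * gg c a v + gg c x v * gg c a x)) • (T 0 2 v * (T 0 2 x * R)) := by
        simp only [exchangeTerm, mul_smul_comm, smul_smul, mul_assoc]
        linear_combination (norm := module)
          ((hh c a x * ((w.eraseIdx k).map fun y => hh c y x).prod)⁻¹ * G * gg c a v) • hswap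
    _ = _ := by
        rw [ff_mul_gg_add_gg_mul_gg hc hav hax hxv.symm]
        have hget : (x :: w).get k.succ = a := rfl
        have herase : (x :: w).eraseIdx k.succ = x :: w.eraseIdx k := rfl
        simp only [exchangeTerm, hget, herase, TT_cons, List.map_cons, List.prod_cons,
          mul_smul_comm, smul_mul_assoc, smul_smul, mul_assoc]
        match_scalars
        field_simp
        ring

end CommutationTerms

theorem T23_mul_TT {c : ℂ} (hc : c ≠ 0) {T : Fin 3 → Fin 3 → ℂ → A} (hT : IsTFam c p21 T)
    (v : ℂ) (u : List ℂ) (hadm : Admissible c (v :: u)) :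
    T 1 2 v * TT c (T 0 2) u = directTerm c T v u + ∑ k, exchangeTerm c T v u k := by
  induction u generalizing v with
  | nil => simp [directTerm, TT, Hnorm, Tprod]
  | cons x w ih =>
    obtain ⟨hv, hadm_xw⟩ := List.pairwise_cons.mp hadm
    obtain ⟨hx, hadm_w⟩ := List.pairwise_cons.mp hadm_xw
    have hxv : x ≠ v := (hv x List.mem_cons_self).1.symm
    have hadm_vw : Admissible c (v :: w) :=
      hadm_w.cons fun y hy => hv y (List.mem_cons_of_mem x hy)
    have hH : (w.map fun y => hh c y x).prod ≠ 0 :=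
      List.prod_ne_zero fun h0 => by
        obtain ⟨y, hy, hy0⟩ := List.mem_map.mp h0
        exact div_ne_zero (hx y hy).2.2 hc hy0
    have hsucc (k : Fin w.length) := by
      have hk : w.get k ∈ w := List.get_mem w k
      exact exchangeTerm_cons_succ (T := T) (v := v) hc hT hxv k (hx _ hk).1.symm
        (hv _ (List.mem_cons_of_mem x hk)).1.symm (hx _ hk).2.2
    have hsplit : ∑ k, exchangeTerm c T v (x :: w) k
        = exchangeTerm c T v (x :: w) 0 + ∑ k : Fin w.length, exchangeTerm c T v (x :: w) k.succ :=
      Fin.sum_univ_succ _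
    rw [TT_cons, mul_smul_comm, ← mul_assoc, hT.T23_mul_T13 hxv, hsplit,
      directTerm_cons, exchangeTerm_cons_zero hc (fun y hy => (hx y hy).1.symm) hH]
    simp only [hsucc, add_mul, smul_mul_assoc, mul_assoc, ih v hadm_vw, ih x hadm_xw, mul_add,
      Finset.mul_sum, Finset.sum_add_distrib, ← Finset.smul_sum]
    module

theorem statement1_general (c : ℂ) (hc : c ≠ 0) (T : Fin 3 → Fin 3 → ℂ → A)
    (hT : IsTFam c p21 T) (v : ℂ) (u : List ℂ)
    (hadm : Admissible c (v :: u)) :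
    T 1 2 v * TT c (T 0 2) u
      = ((-1 : ℂ) ^ u.length * (u.map fun x => ff c x v).prod) •
          (TT c (T 0 2) u * T 1 2 v)
        + ∑ k : Fin u.length,
            (gg c (u.get k) v *
                ((u.eraseIdx (k : ℕ)).map fun x => gg c (u.get k) x).prod) •
              (T 0 2 v * TT c (T 0 2) (u.eraseIdx (k : ℕ)) * T 1 2 (u.get k)) :=
  T23_mul_TT hc hT v u hadm

/-- multiple commutation relation of `T₂₃` with `𝕋₁₃(ū)` in `Y(2|1)`. -/
theorem statement1 (c : ℂ) (hc : c ≠ 0) (T : Fin 3 → Fin 3 → ℂ → A)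
    (hT : IsTFam c p21 T) (v : ℂ) (u : List ℂ) (hlen : 1 ≤ u.length)
    (hadm : Admissible c (v :: u)) :
    T 1 2 v * TT c (T 0 2) u
      = ((-1 : ℂ) ^ u.length * (u.map fun x => ff c x v).prod) •
          (TT c (T 0 2) u * T 1 2 v)
        + ∑ k : Fin u.length,
            (gg c (u.get k) v *
                ((u.eraseIdx (k : ℕ)).map fun x => gg c (u.get k) x).prod) •
              (T 0 2 v * TT c (T 0 2) (u.eraseIdx (k : ℕ)) * T 1 2 (u.get k)) :=
  statement1_general c hc T hT v u hadm

end Bethe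
end
end

section
/- Let c ∈ ℂ be nonzero, let a ≥ 1, and let u₁, …, u_a, v ∈ ℂ be pairwise distinct. With g(u,v) = c/(u−v) and f(u,v) = (u−v+c)/(u−v), one has: Σ_{k=1}^{a−1} g(u_a,uₖ)·g(v,uₖ)·∏_{1≤j≤a−1, j≠k} f(uₖ,uⱼ) = g(v,u_a)·( ∏_{j=1}^{a−1} f(u_a,uⱼ) − ∏_{j=1}^{a−1} f(v,uⱼ) ). -/
open scoped BigOperators
open MulOpposite

noncomputable section

namespace Bethe

variable {A : Type*} [Ring A] [Algebra ℂ A]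

/-! The product `∏ⱼ f(t, xⱼ)` is a rational function of `t` with simple poles at the `xⱼ` and
value `1` at infinity, so it equals `1 + ∑ₖ g(t, xₖ) ∏_{j ≠ k} f(xₖ, xⱼ)` (these are the residues
of the contour integral). Writing `g(u_a, uₖ) g(v, uₖ) = g(v, u_a) (g(u_a, uₖ) - g(v, uₖ))` splits
the sum into the two expansions at `t = u_a` and `t = v`, and the constants `1` cancel. -/

lemma gg_swap (c a b : ℂ) : gg c b a = -gg c a b := by
  rw [gg, gg, ← neg_sub, div_neg]

lemma ff_eq_one_add_gg (c : ℂ) {a b : ℂ} (hab : a ≠ b) : ff c a b = 1 + gg c a b := by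
  have : a - b ≠ 0 := sub_ne_zero.mpr hab
  rw [ff, gg]
  field_simp

lemma gg_mul_gg (c : ℂ) {a b d : ℂ} (hab : a ≠ b) (hbd : b ≠ d) (had : a ≠ d) :
    gg c a b * gg c b d = gg c a d * (gg c a b + gg c b d) := by
  have h₁ : a - b ≠ 0 := sub_ne_zero.mpr hab
  have h₂ : b - d ≠ 0 := sub_ne_zero.mpr hbd
  have h₃ : a - d ≠ 0 := sub_ne_zero.mpr had
  simp only [gg]
  field_simp
  ring

lemma gg_mul_gg_eq_gg_mul_sub (c : ℂ) {w v x : ℂ} (hwx : w ≠ x) (hvx : v ≠ x) (hvw : v ≠ w) :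
    gg c w x * gg c v x = gg c v w * (gg c w x - gg c v x) := by
  linear_combination -gg_mul_gg c hvx hwx.symm hvw + (gg c v x - gg c v w) * gg_swap c w x

theorem prod_ff_eq_one_add_sum {ι : Type*} [DecidableEq ι] (c : ℂ) (x : ι → ℂ) (s : Finset ι)
    (hx : Set.InjOn x s) (t : ℂ) (ht : ∀ i ∈ s, t ≠ x i) :
    ∏ j ∈ s, ff c t (x j) = 1 + ∑ k ∈ s, gg c t (x k) * ∏ j ∈ s.erase k, ff c (x k) (x j) := by
  induction s using Finset.induction_on generalizing t with
  | empty => simp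
  | insert a s has ih =>
    have hx' : Set.InjOn x s := hx.mono (by simp)
    have hxa : ∀ i ∈ s, x a ≠ x i := fun i hi h =>
      has (hx (by simp) (by simp [hi]) h ▸ hi)
    have hta : t ≠ x a := ht a (by simp)
    have hts : ∀ i ∈ s, t ≠ x i := fun i hi => ht i (by simp [hi])
    have herase : ∀ k ∈ s, ∏ j ∈ (insert a s).erase k, ff c (x k) (x j)
        = ff c (x k) (x a) * ∏ j ∈ s.erase k, ff c (x k) (x j) := fun k hk => by
      rw [Finset.erase_insert_of_ne (by rintro rfl; exact has hk),
        Finset.prod_insert (fun h => has (Finset.mem_of_mem_erase h))]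
    rw [Finset.prod_insert has, Finset.sum_insert has, Finset.erase_insert has,
      Finset.sum_congr rfl fun k hk => by rw [herase k hk], ih hx' t hts, ih hx' (x a) hxa,
      ff_eq_one_add_gg c hta]
    -- termwise, this is the three-point identity `g(t,a) g(a,k) = g(t,k) (g(t,a) + g(a,k))`
    have hterm : ∀ k ∈ s, (gg c t (x k) * ∏ j ∈ s.erase k, ff c (x k) (x j)) * (1 + gg c t (x a))
        = gg c t (x a) * (gg c (x a) (x k) * ∏ j ∈ s.erase k, ff c (x k) (x j))
          + gg c t (x k) * (ff c (x k) (x a) * ∏ j ∈ s.erase k, ff c (x k) (x j)) := by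
      intro k hk
      rw [ff_eq_one_add_gg c (hxa k hk).symm]
      linear_combination -(∏ j ∈ s.erase k, ff c (x k) (x j)) *
        (gg_mul_gg c hta (hxa k hk) (hts k hk) + gg c t (x k) * gg_swap c (x k) (x a))
    have hsum := Finset.sum_congr rfl hterm
    rw [← Finset.sum_mul, Finset.sum_add_distrib, ← Finset.mul_sum] at hsum
    linear_combination hsum

theorem statement16_general (c : ℂ) (n : ℕ) (u : Fin (n + 1) → ℂ) (v : ℂ)
    (hdist : ∀ i j : Fin (n + 1), i ≠ j → u i ≠ u j)
    (hv : ∀ i : Fin (n + 1), u i ≠ v) :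
    ∑ k : Fin n,
        gg c (u (Fin.last n)) (u k.castSucc) * gg c v (u k.castSucc) *
          ∏ j : Fin n, (if j ≠ k then ff c (u k.castSucc) (u j.castSucc) else 1)
      = gg c v (u (Fin.last n)) *
          ((∏ j : Fin n, ff c (u (Fin.last n)) (u j.castSucc))
            - ∏ j : Fin n, ff c v (u j.castSucc)) := by
  set x : Fin n → ℂ := fun k => u k.castSucc
  have hx : Function.Injective x := fun i j h =>
    Fin.castSucc_inj.mp (by_contra fun hij => hdist _ _ hij h)
  have hlast : ∀ k, u (Fin.last n) ≠ x k := fun k => hdist _ _ (Fin.castSucc_lt_last k).ne'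
  have expand := prod_ff_eq_one_add_sum c x Finset.univ hx.injOn
  simp only [← Finset.prod_filter, Finset.filter_ne']
  rw [expand _ fun k _ => hlast k, expand v fun k _ => (hv k.castSucc).symm,
    add_sub_add_left_eq_sub, ← Finset.sum_sub_distrib, Finset.mul_sum]
  refine Finset.sum_congr rfl fun k _ => ?_
  rw [gg_mul_gg_eq_gg_mul_sub c (hlast k) (hv _).symm (hv _).symm]
  ring

/-- summation identity obtained by contour integration. -/
theorem statement16 (c : ℂ) (hc : c ≠ 0) (n : ℕ) (u : Fin (n + 1) → ℂ) (v : ℂ)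
    (hdist : ∀ i j : Fin (n + 1), i ≠ j → u i ≠ u j)
    (hv : ∀ i : Fin (n + 1), u i ≠ v) :
    ∑ k : Fin n,
        gg c (u (Fin.last n)) (u k.castSucc) * gg c v (u k.castSucc) *
          ∏ j : Fin n, (if j ≠ k then ff c (u k.castSucc) (u j.castSucc) else 1)
      = gg c v (u (Fin.last n)) *
          ((∏ j : Fin n, ff c (u (Fin.last n)) (u j.castSucc))
            - ∏ j : Fin n, ff c v (u j.castSucc)) :=
  statement16_general c n u v hdist hv

end Bethe
end
end
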